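/- For all integers n ≥ 0 and k ≥ 0, the number of even-special Dyck paths of length 2n with exactly k special steps equals the number of little Schröder paths of length 2n with exactly k double horizontal steps. -/
import Mathlib


/-- A step of a Schröder path: upstep, downstep, or a *double* horizontal step. -/
inductive SchStep : Type
  | up : SchStep
  | down : SchStep
  | horiz : SchStep
deriving DecidableEq

/-- The number of unit steps a step occupies: `horiz` is a double horizontal step. -/
def SchStep.len : SchStep → ℕ
  | .up => 1
  | .down => 1
  | .horiz => 2

/-- The change in height produced by a step. -/
def SchStep.rise : SchStep → ℤ
  | .up => 1
  | .down => -1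
  | .horiz => 0

/-- The length of a path (a double horizontal step counts 2). -/
def pathLen (p : List SchStep) : ℕ := (p.map SchStep.len).sum

/-- The final height of a path started at height 0. -/
def pathHeight (p : List SchStep) : ℤ := (p.map SchStep.rise).sum

/-- A big Schröder path: ends at height 0 and never goes below the x-axis. -/
def IsBigSchroeder (p : List SchStep) : Prop :=
  pathHeight p = 0 ∧ ∀ q : List SchStep, q <+: p → 0 ≤ pathHeight q

/-- A little Schröder path: a big Schröder path with no double horizontal step at
height 0. -/
def IsLittleSchroeder (p : List SchStep) : Prop :=
  IsBigSchroeder p ∧ ∀ q r : List SchStep, p = q ++ SchStep.horiz :: r → pathHeight q ≠ 0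

/-- A Dyck path is a list of booleans: `true` is an upstep, `false` is a downstep. -/
def dyckHeight (p : List Bool) : ℤ := (p.map fun b => if b then (1 : ℤ) else -1).sum

/-- A Dyck path: ends at height 0 and never goes below the x-axis. -/
def IsDyck (p : List Bool) : Prop :=
  dyckHeight p = 0 ∧ ∀ q : List Bool, q <+: p → 0 ≤ dyckHeight q

/-- An even-special Dyck path: a Dyck path `ps.1` together with a marked set `ps.2` of
positions of downsteps leaving from even height. -/
def IsEvenSpecial (ps : List Bool × Finset ℕ) : Prop :=
  IsDyck ps.1 ∧
    ∀ i ∈ ps.2, i < ps.1.length ∧ ps.1.getD i true = false ∧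
      dyckHeight (ps.1.take i) % 2 = 0

section Basic

theorem dyckHeight_append (a b : List Bool) :
    dyckHeight (a ++ b) = dyckHeight a + dyckHeight b := by simp [dyckHeight]

theorem dyckHeight_cons (x : Bool) (a : List Bool) :
    dyckHeight (x :: a) = (if x then 1 else -1) + dyckHeight a := by simp [dyckHeight]

theorem pathHeight_append (a b : List SchStep) :
    pathHeight (a ++ b) = pathHeight a + pathHeight b := by simp [pathHeight]

theorem pathHeight_cons (x : SchStep) (a : List SchStep) :
    pathHeight (x :: a) = x.rise + pathHeight a := by simp [pathHeight]

theorem pathLen_append (a b : List SchStep) :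
    pathLen (a ++ b) = pathLen a + pathLen b := by simp [pathLen]

theorem pathLen_cons (x : SchStep) (a : List SchStep) :
    pathLen (x :: a) = x.len + pathLen a := by simp [pathLen]

theorem prefix_split {α : Type*} {q a b : List α} (h : q <+: a ++ b) :
    q <+: a ∨ ∃ q', q = a ++ q' ∧ q' <+: b := by
  induction a generalizing q with
  | nil => exact Or.inr ⟨q, rfl, h⟩
  | cons x a ih =>
    rcases List.prefix_cons_iff.1 h with rfl | ⟨t, rfl, ht⟩
    · exact Or.inl (List.nil_prefix)
    · rcases ih ht with h1 | ⟨q', rfl, h2⟩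
      · exact Or.inl (List.cons_prefix_cons.2 ⟨rfl, h1⟩)
      · exact Or.inr ⟨q', rfl, h2⟩

theorem eq_append_cons_split {α : Type*} {x y a b : List α} {c : α} (h : x ++ y = a ++ c :: b) :
    (∃ b', x = a ++ c :: b' ∧ b = b' ++ y) ∨ (∃ a', a = x ++ a' ∧ y = a' ++ c :: b) := by
  rcases List.append_eq_append_iff.1 h with ⟨a', ha, hy⟩ | ⟨c', hx, hcb⟩
  · exact Or.inr ⟨a', ha, hy⟩
  · cases c' with
    | nil =>
      refine Or.inr ⟨[], ?_, ?_⟩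
      · simpa using hx.symm
      · simpa using hcb.symm
    | cons c0 c'' =>
      obtain ⟨rfl, rfl⟩ : c0 = c ∧ b = c'' ++ y := by
        have := hcb; simp at this; exact ⟨this.1.symm, this.2⟩
      exact Or.inl ⟨c'', hx, rfl⟩

end Basic

section FirstPassage

/-- first passage decomposition for boolean (Dyck) words -/
theorem dyck_first_return :
    ∀ (w : List Bool) (h : ℤ), 1 ≤ h → h + dyckHeight w ≤ 0 →
    ∃ A B, w = A ++ false :: B ∧ h + dyckHeight A = 1 ∧
      (∀ q, q <+: A → 1 ≤ h + dyckHeight q) := by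
  intro w
  induction w with
  | nil => intro h h1 h2; simp [dyckHeight] at h2; omega
  | cons x w ih =>
    intro h h1 h2
    rw [dyckHeight_cons] at h2
    rcases eq_or_lt_of_le h1 with heq | hgt
    · cases x with
      | false =>
        refine ⟨[], w, rfl, by simp [dyckHeight]; omega, ?_⟩
        intro q hq
        rw [List.prefix_nil.1 hq]
        simp [dyckHeight]; omega
      | true =>
        obtain ⟨A, B, rfl, hA, hpre⟩ := ih (h + 1) (by omega) (by simp at h2 ⊢; omega)
        refine ⟨true :: A, B, rfl, by rw [dyckHeight_cons]; simp; omega, ?_⟩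
        intro q hq
        rcases List.prefix_cons_iff.1 hq with rfl | ⟨t, rfl, ht⟩
        · simp [dyckHeight]; omega
        · have := hpre t ht
          rw [dyckHeight_cons]; simp; omega
    · -- h ≥ 2
      have hx : h + (if x then (1:ℤ) else -1) ≥ 1 := by cases x <;> simp <;> omega
      obtain ⟨A, B, rfl, hA, hpre⟩ := ih (h + (if x then 1 else -1)) hx (by omega)
      refine ⟨x :: A, B, rfl, by rw [dyckHeight_cons]; omega, ?_⟩
      intro q hq
      rcases List.prefix_cons_iff.1 hq with rfl | ⟨t, rfl, ht⟩
      · simp [dyckHeight]; omega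
      · have := hpre t ht
        rw [dyckHeight_cons]; omega

/-- first passage decomposition for Schröder words: split at the first step which is a
down or a horiz taken at (relative) height `1`. -/
theorem sch_first_split :
    ∀ (w : List SchStep) (h : ℤ), 1 ≤ h → h + pathHeight w ≤ 0 →
    ∃ A c B, w = A ++ c :: B ∧ (c = SchStep.down ∨ c = SchStep.horiz) ∧
      h + pathHeight A = 1 ∧
      (∀ q, q <+: A → 1 ≤ h + pathHeight q) ∧
      (∀ q r, A = q ++ SchStep.horiz :: r → h + pathHeight q ≠ 1) := by
  intro w
  induction w with
  | nil => intro h h1 h2; simp [pathHeight] at h2; omega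
  | cons x w ih =>
    intro h h1 h2
    rw [pathHeight_cons] at h2
    rcases eq_or_lt_of_le h1 with heq | hgt
    · cases x with
      | down =>
        refine ⟨[], .down, w, rfl, Or.inl rfl, by simp [pathHeight]; omega, ?_, ?_⟩
        · intro q hq; rw [List.prefix_nil.1 hq]; simp [pathHeight]; omega
        · intro q r hqr; exact absurd hqr (by simp)
      | horiz =>
        refine ⟨[], .horiz, w, rfl, Or.inr rfl, by simp [pathHeight]; omega, ?_, ?_⟩
        · intro q hq; rw [List.prefix_nil.1 hq]; simp [pathHeight]; omega
        · intro q r hqr; exact absurd hqr (by simp)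
      | up =>
        obtain ⟨A, c, B, rfl, hc, hA, hpre, hhor⟩ := ih (h + 1) (by omega)
          (by simp [SchStep.rise] at h2 ⊢; omega)
        refine ⟨.up :: A, c, B, rfl, hc, by rw [pathHeight_cons]; simp [SchStep.rise]; omega,
          ?_, ?_⟩
        · intro q hq
          rcases List.prefix_cons_iff.1 hq with rfl | ⟨t, rfl, ht⟩
          · simp [pathHeight]; omega
          · have := hpre t ht; rw [pathHeight_cons]; simp [SchStep.rise]; omega
        · intro q r hqr
          cases q with
          | nil => simp at hqr
          | cons y q' =>
            simp only [List.cons_append, List.cons.injEq] at hqr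
            obtain ⟨rfl, hqr⟩ := hqr
            have := hhor q' r hqr
            rw [pathHeight_cons]; simp [SchStep.rise]; omega
    · -- h ≥ 2, any step: recurse
      have hx : 1 ≤ h + x.rise := by cases x <;> simp [SchStep.rise] <;> omega
      obtain ⟨A, c, B, rfl, hc, hA, hpre, hhor⟩ := ih (h + x.rise) hx (by omega)
      refine ⟨x :: A, c, B, rfl, hc, by rw [pathHeight_cons]; omega, ?_, ?_⟩
      · intro q hq
        rcases List.prefix_cons_iff.1 hq with rfl | ⟨t, rfl, ht⟩
        · simp [pathHeight]; omega
        · have := hpre t ht; rw [pathHeight_cons]; omega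
      · intro q r hqr
        cases q with
        | nil =>
          simp only [List.nil_append, List.cons.injEq] at hqr
          obtain ⟨rfl, _⟩ := hqr
          simp [pathHeight, SchStep.rise] at hgt ⊢; omega
        | cons y q' =>
          simp only [List.cons_append, List.cons.injEq] at hqr
          obtain ⟨rfl, hqr⟩ := hqr
          have := hhor q' r hqr
          rw [pathHeight_cons]; omega

end FirstPassage

section Trees

/-- plane binary trees with a boolean mark at each internal node -/
inductive M : Type
  | leaf : M
  | node (q r : M) (m : Bool) : M
deriving DecidableEq

namespace M

def msize : M → ℕ
  | leaf => 0
  | node q r _ => msize q + msize r + 1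

def mmarks : M → ℕ
  | leaf => 0
  | node q r m => mmarks q + mmarks r + (if m then 1 else 0)

/-- validity in context `c` (c = true: the closing downstep of the root node may be
marked). -/
def validP (c : Bool) : M → Prop
  | leaf => True
  | node q r m => (m = true → c = true) ∧ validP (!c) q ∧ validP c r

/-- validity for valley-marked trees: a node may be marked only if its right part is
nonempty -/
def validV : M → Prop
  | leaf => True
  | node q r m => (m = true → r ≠ leaf) ∧ validV q ∧ validV r

mutual
def sigma : M → M
  | leaf => leaf
  | node q r _ => node (sigma r) (gee q).1 (gee q).2
def gee : M → M × Bool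
  | leaf => (leaf, false)
  | node q leaf m => (node (sigma q) leaf false, m)
  | node q (node r1 r2 mr) m =>
      (node (sigma q) (gee (node r1 r2 mr)).1 m, (gee (node r1 r2 mr)).2)
end

mutual
def sigma' : M → M
  | leaf => leaf
  | node a b mb => node (gee' b mb) (sigma' a) false
def gee' : M → Bool → M
  | leaf, _ => leaf
  | node a leaf _, b => node (sigma' a) leaf b
  | node a (node b1 b2 mb) m, b => node (sigma' a) (gee' (node b1 b2 mb) b) m
end

end M

end Trees

section SigmaBij

namespace M

theorem gee_node (q r : M) (m : Bool) : gee (node q r m) =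
    (node (sigma q) (gee r).1 (if r = leaf then false else m),
      if r = leaf then m else (gee r).2) := by
  cases r <;> simp [gee]

theorem gee'_node (a B : M) (m b : Bool) :
    gee' (node a B m) b = node (sigma' a) (gee' B b) (if B = leaf then b else m) := by
  cases B <;> simp [gee']

theorem gee_fst_ne_leaf (q r : M) (m : Bool) : (gee (node q r m)).1 ≠ leaf := by
  rw [gee_node]; simp

theorem sigma_gee_invariants : ∀ t : M,
    (validP false t → validV (sigma t) ∧ msize (sigma t) = msize t ∧
      mmarks (sigma t) = mmarks t) ∧
    (validP true t → validV (gee t).1 ∧ ((gee t).2 = true → (gee t).1 ≠ leaf) ∧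
      msize (gee t).1 = msize t ∧
      mmarks (gee t).1 + (if (gee t).2 then 1 else 0) = mmarks t) := by
  intro t
  induction t with
  | leaf => simp [sigma, gee, validV, msize, mmarks]
  | node q r m ihq ihr =>
    constructor
    · rintro ⟨hm, hq, hr⟩
      obtain ⟨hv1, hv2, hs1, hk1⟩ := ihq.2 hq
      obtain ⟨hv3, hs3, hk3⟩ := ihr.1 hr
      have hm0 : m = false := by
        cases m
        · rfl
        · exact absurd (hm rfl) (by simp)
      subst hm0
      refine ⟨⟨hv2, hv3, hv1⟩, ?_, ?_⟩
      · simp only [sigma, msize]; omega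
      · simp only [sigma, mmarks] at *
        rcases hb : (gee q).2 <;> rw [hb] at hk1 <;> simp at hk1 ⊢ <;> omega
    · rintro ⟨hm, hq, hr⟩
      obtain ⟨hvq, hsq, hkq⟩ := ihq.1 hq
      rw [gee_node]
      cases r with
      | leaf =>
        simp only [if_pos rfl]
        refine ⟨⟨by simp, hvq, trivial⟩, fun _ => by simp, ?_, ?_⟩
        · simp only [gee, msize]; omega
        · simp only [gee, mmarks, msize]
          rcases m <;> simp <;> omega
      | node r1 r2 mr =>
        obtain ⟨hvr, hner, hsr, hkr⟩ := ihr.2 hr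
        have hne : (r1.node r2 mr : M) ≠ leaf := by simp
        simp only [if_neg hne]
        refine ⟨⟨fun _ => ?_, hvq, hvr⟩, fun _ => by simp, ?_, ?_⟩
        · exact gee_fst_ne_leaf r1 r2 mr
        · simp only [msize] at hsr ⊢; omega
        · simp only [mmarks] at hkr ⊢
          rcases m <;> rcases hb : (gee (node r1 r2 mr)).2 <;> rw [hb] at hkr <;>
            simp at hkr ⊢ <;> omega

theorem sigma_leftinv : ∀ t : M,
    (validP false t → sigma' (sigma t) = t) ∧
    (validP true t → gee' (gee t).1 (gee t).2 = t) := by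
  intro t
  induction t with
  | leaf => simp [sigma, gee, sigma', gee']
  | node q r m ihq ihr =>
    constructor
    · rintro ⟨hm, hq, hr⟩
      have hm0 : m = false := by
        cases m
        · rfl
        · exact absurd (hm rfl) (by simp)
      subst hm0
      simp only [sigma, sigma']
      rw [ihq.2 hq, ihr.1 hr]
    · rintro ⟨hm, hq, hr⟩
      rw [gee_node]
      cases r with
      | leaf =>
        simp only [if_pos rfl]
        rw [gee'_node]
        simp [gee', gee, ihq.1 hq]
      | node r1 r2 mr =>
        have hne : (r1.node r2 mr : M) ≠ leaf := by simp
        simp only [if_neg hne]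
        rw [gee'_node, if_neg (gee_fst_ne_leaf r1 r2 mr), ihq.1 hq, ihr.2 hr]

theorem sigma_rightinv : ∀ t : M,
    (validV t → sigma (sigma' t) = t) ∧
    (∀ b, validV t → (b = true → t ≠ leaf) → gee (gee' t b) = (t, b)) := by
  intro t
  induction t with
  | leaf =>
    refine ⟨fun _ => rfl, fun b _ hb => ?_⟩
    have : b = false := by
      cases b
      · rfl
      · exact absurd rfl (hb rfl)
    subst this
    simp [gee', gee]
  | node a B m iha ihB =>
    constructor
    · rintro ⟨hmB, ha, hB⟩
      simp only [sigma', sigma]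
      rw [ihB.2 m hB hmB, iha.1 ha]
    · rintro b ⟨hmB, ha, hB⟩ _
      rw [gee'_node]
      cases B with
      | leaf =>
        have hm0 : m = false := by
          cases m
          · rfl
          · exact absurd rfl (hmB rfl)
        subst hm0
        simp only [if_pos rfl]
        rw [gee_node]
        simp [gee', gee, iha.1 ha]
      | node b1 b2 mb =>
        have hne : (b1.node b2 mb : M) ≠ leaf := by simp
        simp only [if_neg hne]
        have h2 := ihB.2 b hB (fun _ => hne)
        have hne2 : gee' (b1.node b2 mb) b ≠ leaf := by rw [gee'_node]; simp
        rw [gee_node, h2, iha.1 ha]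
        simp [hne2]

theorem sigma'_valid : ∀ t : M,
    (validV t → validP false (sigma' t)) ∧
    (∀ b, validV t → (b = true → t ≠ leaf) → validP true (gee' t b)) := by
  intro t
  induction t with
  | leaf => exact ⟨fun _ => trivial, fun b _ _ => trivial⟩
  | node a B m iha ihB =>
    constructor
    · rintro ⟨hmB, ha, hB⟩
      exact ⟨by simp, ihB.2 m hB hmB, iha.1 ha⟩
    · rintro b ⟨hmB, ha, hB⟩ _
      rw [gee'_node]
      cases B with
      | leaf =>
        exact ⟨fun _ => rfl, iha.1 ha, trivial⟩
      | node b1 b2 mb =>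
        have hne : (b1.node b2 mb : M) ≠ leaf := by simp
        exact ⟨fun _ => rfl, iha.1 ha, ihB.2 b hB (fun _ => hne)⟩

/-- the bijection between even-marked trees and valley-marked trees -/
noncomputable def sigmaEquiv (n k : ℕ) :
    {t : M // validP false t ∧ msize t = n ∧ mmarks t = k} ≃
    {t : M // validV t ∧ msize t = n ∧ mmarks t = k} := by
  refine Equiv.ofBijective (fun t => ⟨sigma t.1, ?_, ?_, ?_⟩) ⟨?_, ?_⟩
  · exact ((sigma_gee_invariants t.1).1 t.2.1).1
  · rw [((sigma_gee_invariants t.1).1 t.2.1).2.1]; exact t.2.2.1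
  · rw [((sigma_gee_invariants t.1).1 t.2.1).2.2]; exact t.2.2.2
  · rintro ⟨s, hs⟩ ⟨t, ht⟩ h
    simp only [Subtype.mk.injEq] at h ⊢
    rw [← (sigma_leftinv s).1 hs.1, ← (sigma_leftinv t).1 ht.1, h]
  · rintro ⟨t, ht⟩
    refine ⟨⟨sigma' t, (sigma'_valid t).1 ht.1, ?_, ?_⟩, ?_⟩
    · have h1 := ((sigma_gee_invariants (sigma' t)).1 ((sigma'_valid t).1 ht.1)).2.1
      rw [(sigma_rightinv t).1 ht.1] at h1
      rw [← h1]; exact ht.2.1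
    · have h1 := ((sigma_gee_invariants (sigma' t)).1 ((sigma'_valid t).1 ht.1)).2.2
      rw [(sigma_rightinv t).1 ht.1] at h1
      rw [← h1]; exact ht.2.2
    · simp only [Subtype.mk.injEq]
      exact (sigma_rightinv t).1 ht.1

end M

end SigmaBij

section DyckSide

theorem isDyck_node {A B : List Bool} (hA : IsDyck A) (hB : IsDyck B) :
    IsDyck (true :: A ++ false :: B) := by
  constructor
  · rw [List.cons_append, dyckHeight_cons, dyckHeight_append, dyckHeight_cons]
    simp [hA.1, hB.1]
  · intro q hq
    rcases List.prefix_cons_iff.1 hq with rfl | ⟨t, rfl, ht⟩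
    · simp [dyckHeight]
    · rcases prefix_split ht with h1 | ⟨q', rfl, h2⟩
      · have := hA.2 t h1
        rw [dyckHeight_cons]; simp; omega
      · rcases List.prefix_cons_iff.1 h2 with rfl | ⟨t', rfl, ht'⟩
        · have h0 := hA.1
          rw [dyckHeight_cons, dyckHeight_append]
          simp [dyckHeight] at h0 ⊢
          omega
        · have := hB.2 t' ht'
          rw [dyckHeight_cons, dyckHeight_append, dyckHeight_cons]
          simp [hA.1]; omega

/-- unique decomposition: if `A₁ ++ false :: B₁ = A₂ ++ false :: B₂` with both `Aᵢ`
Dyck, then the decompositions agree. -/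
theorem dyck_append_inj {A₁ B₁ A₂ B₂ : List Bool} (h1 : IsDyck A₁) (h2 : IsDyck A₂)
    (h : A₁ ++ false :: B₁ = A₂ ++ false :: B₂) : A₁ = A₂ ∧ B₁ = B₂ := by
  have key : ∀ {X₁ Y₁ X₂ Y₂ : List Bool}, IsDyck X₁ → IsDyck X₂ →
      X₁ ++ false :: Y₁ = X₂ ++ false :: Y₂ → X₁.length ≤ X₂.length → X₁ = X₂ := by
    intro X₁ Y₁ X₂ Y₂ g1 g2 g hlen
    have hpre : X₁ <+: X₂ := by
      have : X₁ <+: X₂ ++ false :: Y₂ := ⟨false :: Y₁, g⟩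
      exact (List.isPrefix_append_of_length hlen).1 this
    obtain ⟨d, rfl⟩ := hpre
    cases d with
    | nil => simp
    | cons x d' =>
      exfalso
      rw [List.append_assoc] at g
      have hx : x = false := by
        have := List.append_cancel_left g
        simpa using congrArg (fun l => l.headI) this
      subst hx
      have hpre2 : X₁ ++ [false] <+: X₁ ++ (false :: d') := ⟨d', by simp⟩
      have := g2.2 _ hpre2
      rw [dyckHeight_append, g1.1] at this
      simp [dyckHeight] at this
  rcases le_total A₁.length A₂.length with hle | hle
  · have := key h1 h2 h hle
    subst this
    exact ⟨rfl, List.append_cancel_left h |> fun g => by simpa using g⟩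
  · have := key h2 h1 h.symm hle
    subst this
    exact ⟨rfl, List.append_cancel_left h |> fun g => by simpa using g⟩

end DyckSide

section DyckTree

namespace M

def toDyck : M → List Bool
  | leaf => []
  | node q r _ => true :: toDyck q ++ false :: toDyck r

def posSet : M → Finset ℕ
  | leaf => ∅
  | node q r m =>
      ((posSet q).image (· + 1) ∪ (posSet r).image (· + (2 * msize q + 2))) ∪
        (if m then {2 * msize q + 1} else ∅)

theorem toDyck_length (t : M) : (toDyck t).length = 2 * msize t := by
  induction t with
  | leaf => rfl
  | node q r m ihq ihr => simp [toDyck, msize, ihq, ihr]; omega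

theorem toDyck_isDyck (t : M) : IsDyck (toDyck t) := by
  induction t with
  | leaf => exact ⟨rfl, fun q hq => by rw [List.prefix_nil.1 hq]; simp [dyckHeight]⟩
  | node q r m ihq ihr => exact isDyck_node ihq ihr

theorem mem_posSet_node {j : ℕ} {q r : M} {m : Bool} :
    j ∈ posSet (node q r m) ↔ (∃ i ∈ posSet q, j = i + 1) ∨
      (∃ i ∈ posSet r, j = i + (2 * msize q + 2)) ∨ (m = true ∧ j = 2 * msize q + 1) := by
  simp only [posSet, Finset.mem_union, Finset.mem_image]
  constructor
  · rintro ((⟨i, hi, rfl⟩ | ⟨i, hi, rfl⟩) | h)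
    · exact Or.inl ⟨i, hi, rfl⟩
    · exact Or.inr (Or.inl ⟨i, hi, rfl⟩)
    · cases m with
      | false => simp at h
      | true => simp at h; exact Or.inr (Or.inr ⟨rfl, h⟩)
  · rintro (⟨i, hi, rfl⟩ | ⟨i, hi, rfl⟩ | ⟨rfl, rfl⟩)
    · exact Or.inl (Or.inl ⟨i, hi, rfl⟩)
    · exact Or.inl (Or.inr ⟨i, hi, rfl⟩)
    · right; simp

theorem posSet_lt {t : M} : ∀ j ∈ posSet t, j < 2 * msize t := by
  induction t with
  | leaf => simp [posSet]
  | node q r m ihq ihr =>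
    intro j hj
    rcases mem_posSet_node.1 hj with ⟨i, hi, rfl⟩ | ⟨i, hi, rfl⟩ | ⟨_, rfl⟩
    · have := ihq i hi; simp [msize]; omega
    · have := ihr i hi; simp [msize]; omega
    · simp [msize]; omega

theorem posSet_pos {q r : M} {m : Bool} : ∀ j ∈ posSet (node q r m), 1 ≤ j := by
  intro j hj
  rcases mem_posSet_node.1 hj with ⟨i, _, rfl⟩ | ⟨i, _, rfl⟩ | ⟨_, rfl⟩ <;> omega

theorem posSet_card (t : M) : (posSet t).card = mmarks t := by
  induction t with
  | leaf => rfl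
  | node q r m ihq ihr =>
    rw [posSet]
    have hinj1 : Set.InjOn (· + 1) (posSet q) := fun a _ b _ h => by simpa using h
    have hinj2 : Set.InjOn (· + (2 * msize q + 2)) (posSet r) := fun a _ b _ h => by
      simpa using h
    have hd1 : Disjoint ((posSet q).image (· + 1)) ((posSet r).image (· + (2 * msize q + 2))) := by
      rw [Finset.disjoint_left]
      rintro a ha hb
      simp only [Finset.mem_image] at ha hb
      obtain ⟨i, hi, rfl⟩ := ha
      obtain ⟨i', hi', he⟩ := hb
      have := posSet_lt i hi
      omega
    have hd2 : Disjoint (((posSet q).image (· + 1)) ∪ ((posSet r).image (· + (2 * msize q + 2))))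
        (if m then ({2 * msize q + 1} : Finset ℕ) else ∅) := by
      cases m with
      | false => simp
      | true =>
        rw [Finset.disjoint_left]
        rintro a ha hb
        simp only [if_true, Finset.mem_singleton] at hb
        subst hb
        simp only [Finset.mem_union, Finset.mem_image] at ha
        rcases ha with ⟨i, hi, he⟩ | ⟨i, hi, he⟩
        · have := posSet_lt i hi; omega
        · omega
    rw [Finset.card_union_of_disjoint hd2, Finset.card_union_of_disjoint hd1,
      Finset.card_image_of_injOn hinj1, Finset.card_image_of_injOn hinj2, ihq, ihr]
    cases m <;> simp [mmarks]

end M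

end DyckTree

section NodeIndex

theorem node_getD_left {A B : List Bool} {j : ℕ} (h : j < A.length) (d : Bool) :
    (true :: A ++ false :: B).getD (j + 1) d = A.getD j d := by
  rw [List.cons_append, List.getD_cons_succ, List.getD_append _ _ _ _ h]

theorem node_getD_mid {A B : List Bool} (d : Bool) :
    (true :: A ++ false :: B).getD (A.length + 1) d = false := by
  rw [List.cons_append, List.getD_cons_succ, List.getD_append_right _ _ _ _ le_rfl]
  simp

theorem node_getD_right {A B : List Bool} (j : ℕ) (d : Bool) :
    (true :: A ++ false :: B).getD (j + A.length + 2) d = B.getD j d := by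
  rw [List.cons_append, List.getD_cons_succ, List.getD_append_right _ _ _ _ (by omega)]
  have : j + A.length + 1 - A.length = j + 1 := by omega
  rw [this, List.getD_cons_succ]

theorem node_take_left {A B : List Bool} {j : ℕ} (h : j ≤ A.length) :
    (true :: A ++ false :: B).take (j + 1) = true :: A.take j := by
  rw [List.cons_append, List.take_succ_cons, List.take_append_of_le_length h]

theorem node_take_right {A B : List Bool} (j : ℕ) :
    (true :: A ++ false :: B).take (j + A.length + 2) = true :: A ++ false :: B.take j := by
  rw [List.cons_append, List.take_succ_cons, List.take_append]
  have h1 : j + A.length + 1 - A.length = j + 1 := by omega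
  rw [h1, List.take_succ_cons, List.take_of_length_le (by omega)]
  simp

end NodeIndex

namespace M

theorem posSet_spec : ∀ (t : M) (c : Bool), validP c t → ∀ j ∈ posSet t,
    (toDyck t).getD j true = false ∧
      (dyckHeight ((toDyck t).take j) + (if c then 1 else 0)) % 2 = 0 := by
  intro t
  induction t with
  | leaf => simp [posSet]
  | node q r m ihq ihr =>
    rintro c ⟨hm, hq, hr⟩ j hj
    have hA : (toDyck q).length = 2 * msize q := toDyck_length q
    rcases mem_posSet_node.1 hj with ⟨i, hi, rfl⟩ | ⟨i, hi, rfl⟩ | ⟨hm', rfl⟩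
    · have hilt : i < (toDyck q).length := by rw [hA]; exact posSet_lt i hi
      obtain ⟨hg, hh⟩ := ihq (!c) hq i hi
      refine ⟨by rw [toDyck, node_getD_left hilt]; exact hg, ?_⟩
      rw [toDyck, node_take_left hilt.le, dyckHeight_cons]
      simp only [if_true]
      rcases c <;> simp at hh ⊢ <;> omega
    · obtain ⟨hg, hh⟩ := ihr c hr i hi
      have h2 : i + (2 * msize q + 2) = i + (toDyck q).length + 2 := by omega
      refine ⟨by rw [toDyck, h2, node_getD_right]; exact hg, ?_⟩
      rw [toDyck, h2, node_take_right, dyckHeight_append, dyckHeight_cons, dyckHeight_cons,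
        (toDyck_isDyck q).1]
      rcases c <;> simp at hh ⊢ <;> omega
    · have h2 : 2 * msize q + 1 = (toDyck q).length + 1 := by rw [hA]
      refine ⟨by rw [toDyck, h2, node_getD_mid], ?_⟩
      rw [toDyck, h2]
      have h3 : (toDyck q).length + 1 = (toDyck q).length + 1 := rfl
      rw [show ((toDyck q).length + 1) = ((toDyck q).length + 1) from rfl]
      rw [show (true :: toDyck q ++ false :: toDyck r).take ((toDyck q).length + 1)
          = true :: (toDyck q).take (toDyck q).length from node_take_left le_rfl]
      rw [List.take_length, dyckHeight_cons, (toDyck_isDyck q).1]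
      rw [hm hm']
      simp

end M

namespace M

theorem toDyck_posSet_inj : ∀ s t : M, toDyck s = toDyck t → posSet s = posSet t → s = t := by
  intro s
  induction s with
  | leaf =>
    intro t hD _
    cases t with
    | leaf => rfl
    | node q r m => exact absurd hD.symm (by simp [toDyck])
  | node q1 r1 m1 ihq ihr =>
    intro t hD hP
    cases t with
    | leaf => exact absurd hD (by simp [toDyck])
    | node q2 r2 m2 =>
      simp only [toDyck, List.cons_append, List.cons.injEq, true_and] at hD
      obtain ⟨hA, hB⟩ := dyck_append_inj (toDyck_isDyck q1) (toDyck_isDyck q2) hD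
      have hsz : msize q1 = msize q2 := by
        have h1 := toDyck_length q1
        have h2 := toDyck_length q2
        rw [hA] at h1; omega
      have hPq : posSet q1 = posSet q2 := by
        ext i
        constructor
        · intro hi
          have hlt : i < 2 * msize q1 := posSet_lt i hi
          have : i + 1 ∈ posSet (node q2 r2 m2) := by
            rw [← hP]; exact mem_posSet_node.2 (Or.inl ⟨i, hi, rfl⟩)
          rcases mem_posSet_node.1 this with ⟨i', hi', he⟩ | ⟨i', hi', he⟩ | ⟨_, he⟩
          · obtain rfl : i' = i := by omega
            exact hi'
          · omega
          · omega
        · intro hi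
          have hlt : i < 2 * msize q2 := posSet_lt i hi
          have : i + 1 ∈ posSet (node q1 r1 m1) := by
            rw [hP]; exact mem_posSet_node.2 (Or.inl ⟨i, hi, rfl⟩)
          rcases mem_posSet_node.1 this with ⟨i', hi', he⟩ | ⟨i', hi', he⟩ | ⟨_, he⟩
          · obtain rfl : i' = i := by omega
            exact hi'
          · omega
          · omega
      have hPr : posSet r1 = posSet r2 := by
        ext i
        constructor
        · intro hi
          have : i + (2 * msize q1 + 2) ∈ posSet (node q2 r2 m2) := by
            rw [← hP]; exact mem_posSet_node.2 (Or.inr (Or.inl ⟨i, hi, rfl⟩))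
          rcases mem_posSet_node.1 this with ⟨i', hi', he⟩ | ⟨i', hi', he⟩ | ⟨_, he⟩
          · have := posSet_lt i' hi'; omega
          · obtain rfl : i' = i := by omega
            exact hi'
          · omega
        · intro hi
          have : i + (2 * msize q2 + 2) ∈ posSet (node q1 r1 m1) := by
            rw [hP]; exact mem_posSet_node.2 (Or.inr (Or.inl ⟨i, hi, rfl⟩))
          rcases mem_posSet_node.1 this with ⟨i', hi', he⟩ | ⟨i', hi', he⟩ | ⟨_, he⟩
          · have := posSet_lt i' hi'; omega
          · obtain rfl : i' = i := by omega
            exact hi'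
          · omega
      have hm : m1 = m2 := by
        have key : ∀ (qa ra : M) (ma : Bool), (2 * msize qa + 1 ∈ posSet (node qa ra ma)) ↔
            ma = true := by
          intro qa ra ma
          rw [mem_posSet_node]
          constructor
          · rintro (⟨i', hi', he⟩ | ⟨i', hi', he⟩ | ⟨h, _⟩)
            · have := posSet_lt i' hi'; omega
            · omega
            · exact h
          · intro h; exact Or.inr (Or.inr ⟨h, rfl⟩)
        have h1 := key q1 r1 m1
        have h2 := key q2 r2 m2
        rw [hP, hsz] at h1
        have h3 : (m1 = true) ↔ (m2 = true) := h1.symm.trans h2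
        cases m1 <;> cases m2
        · rfl
        · exact absurd (h3.2 rfl) (by simp)
        · exact absurd (h3.1 rfl) (by simp)
        · rfl
      rw [ihq q2 hA hPq, ihr r2 hB hPr, hm]

end M

namespace M

theorem toDyck_surj : ∀ (N : ℕ) (w : List Bool) (S : Finset ℕ) (c : Bool),
    w.length ≤ N → IsDyck w →
    (∀ i ∈ S, i < w.length ∧ w.getD i true = false ∧
      (dyckHeight (w.take i) + (if c then 1 else 0)) % 2 = 0) →
    ∃ t : M, validP c t ∧ toDyck t = w ∧ posSet t = S := by
  intro N
  induction N with
  | zero =>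
    intro w S c hlen hD hS
    have hw : w = [] := List.length_eq_zero_iff.1 (by omega)
    subst hw
    have hSe : S = ∅ := by
      refine Finset.eq_empty_of_forall_notMem (fun i hi => ?_)
      have := (hS i hi).1
      simp at this
    subst hSe
    exact ⟨leaf, trivial, rfl, rfl⟩
  | succ N ih =>
    intro w S c hlen hD hS
    cases w with
    | nil =>
      have hSe : S = ∅ := by
        refine Finset.eq_empty_of_forall_notMem (fun i hi => ?_)
        have := (hS i hi).1
        simp at this
      subst hSe
      exact ⟨leaf, trivial, rfl, rfl⟩
    | cons x w' =>
      have hx : x = true := by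
        by_contra hx
        have hx' : x = false := by cases x; rfl; exact absurd rfl hx
        subst hx'
        have := hD.2 [false] ⟨w', rfl⟩
        simp [dyckHeight] at this
      subst hx
      have hw' : (1 : ℤ) + dyckHeight w' ≤ 0 := by
        have := hD.1
        rw [dyckHeight_cons] at this
        simp at this
        omega
      obtain ⟨A, B, rfl, hA1, hApre⟩ := dyck_first_return w' 1 le_rfl hw'
      simp only [← List.cons_append] at hD hS hlen ⊢
      have hDA : IsDyck A := by
        refine ⟨by omega, fun q hq => by have := hApre q hq; omega⟩
      have hDB : IsDyck B := by
        constructor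
        · have := hD.1
          rw [dyckHeight_append, dyckHeight_cons, dyckHeight_cons] at this
          simp at this
          omega
        · intro q hq
          obtain ⟨rest, rfl⟩ := hq
          have hpQ : (true :: A ++ false :: q) <+: (true :: A ++ false :: (q ++ rest)) :=
            ⟨rest, by simp⟩
          have := hD.2 _ hpQ
          rw [dyckHeight_append, dyckHeight_cons, dyckHeight_cons] at this
          simp at this
          omega
      set L := A.length with hLdef
      have hzero : (0 : ℕ) ∉ S := by
        intro h0
        have := (hS 0 h0).2.1
        simp at this
      set SA := (S.filter (· ≤ L)).image (· - 1) with hSAdef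
      set SB := (S.filter (fun i => L + 2 ≤ i)).image (· - (L + 2)) with hSBdef
      have memSA : ∀ i, i ∈ SA ↔ i + 1 ∈ S ∧ i + 1 ≤ L := by
        intro i
        rw [hSAdef]
        simp only [Finset.mem_image, Finset.mem_filter]
        constructor
        · rintro ⟨j, ⟨hjS, hjL⟩, rfl⟩
          have hj0 : j ≠ 0 := fun h => hzero (h ▸ hjS)
          have : j - 1 + 1 = j := by omega
          rw [this]
          exact ⟨hjS, hjL⟩
        · rintro ⟨h1, h2⟩
          exact ⟨i + 1, ⟨h1, h2⟩, by omega⟩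
      have memSB : ∀ i, i ∈ SB ↔ i + (L + 2) ∈ S := by
        intro i
        rw [hSBdef]
        simp only [Finset.mem_image, Finset.mem_filter]
        constructor
        · rintro ⟨j, ⟨hjS, hjL⟩, rfl⟩
          have : j - (L + 2) + (L + 2) = j := by omega
          rw [this]
          exact hjS
        · rintro h1
          exact ⟨i + (L + 2), ⟨h1, by omega⟩, by omega⟩
      have hlenw : (true :: A ++ false :: B).length = L + B.length + 2 := by
        simp [hLdef]; omega
      -- conditions for A
      have condA : ∀ i ∈ SA, i < A.length ∧ A.getD i true = false ∧
          (dyckHeight (A.take i) + (if !c then 1 else 0)) % 2 = 0 := by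
        intro i hi
        obtain ⟨hiS, hiL⟩ := (memSA i).1 hi
        have hilt : i < A.length := by omega
        obtain ⟨_, hg, hh⟩ := hS (i + 1) hiS
        refine ⟨hilt, ?_, ?_⟩
        · rw [node_getD_left hilt] at hg
          exact hg
        · rw [node_take_left hilt.le, dyckHeight_cons] at hh
          rcases c <;> simp at hh ⊢ <;> omega
      have condB : ∀ i ∈ SB, i < B.length ∧ B.getD i true = false ∧
          (dyckHeight (B.take i) + (if c then 1 else 0)) % 2 = 0 := by
        intro i hi
        have hiS := (memSB i).1 hi
        obtain ⟨hlt, hg, hh⟩ := hS (i + (L + 2)) hiS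
        have he : i + (L + 2) = i + A.length + 2 := by omega
        rw [he] at hg hh
        rw [hlenw] at hlt
        refine ⟨by omega, ?_, ?_⟩
        · rw [node_getD_right] at hg
          exact hg
        · rw [node_take_right, dyckHeight_append, dyckHeight_cons, dyckHeight_cons,
            hDA.1] at hh
          simp at hh ⊢
          omega
      obtain ⟨tA, hvA, htA, hpA⟩ := ih A SA (!c) (by simp at hlen; omega) hDA condA
      obtain ⟨tB, hvB, htB, hpB⟩ := ih B SB c (by simp at hlen; omega) hDB condB
      set m : Bool := decide ((L + 1) ∈ S) with hmdef
      have hszA : 2 * msize tA = L := by rw [← toDyck_length tA, htA]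
      refine ⟨node tA tB m, ⟨?_, hvA, hvB⟩, ?_, ?_⟩
      · intro hm
        have hmem : L + 1 ∈ S := by
          rw [hmdef] at hm
          exact of_decide_eq_true hm
        have hcond := (hS (L + 1) hmem).2.2
        have htk : (true :: A ++ false :: B).take (L + 1) = true :: A := by
          have := node_take_left (A := A) (B := B) (j := L) le_rfl
          rw [this, List.take_length]
        rw [htk, dyckHeight_cons] at hcond
        have hA0 := hDA.1
        cases c
        · exfalso; simp at hcond; omega
        · rfl
      · rw [toDyck, htA, htB]
      · ext j
        rw [mem_posSet_node]
        constructor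
        · rintro (⟨i, hi, rfl⟩ | ⟨i, hi, rfl⟩ | ⟨hm, rfl⟩)
          · rw [hpA] at hi
            exact ((memSA i).1 hi).1
          · rw [hpB] at hi
            have := (memSB i).1 hi
            have he : i + (2 * msize tA + 2) = i + (L + 2) := by omega
            rw [he]
            exact this
          · have : L + 1 ∈ S := of_decide_eq_true (hmdef ▸ hm)
            have he : 2 * msize tA + 1 = L + 1 := by omega
            rw [he]
            exact this
        · intro hjS
          have hj0 : j ≠ 0 := fun h => hzero (h ▸ hjS)
          have hjlt : j < L + B.length + 2 := by
            have := (hS j hjS).1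
            rw [hlenw] at this
            exact this
          rcases lt_trichotomy j (L + 1) with h1 | h1 | h1
          · refine Or.inl ⟨j - 1, ?_, by omega⟩
            rw [hpA, memSA]
            constructor
            · have : j - 1 + 1 = j := by omega
              rw [this]; exact hjS
            · omega
          · refine Or.inr (Or.inr ⟨?_, by omega⟩)
            rw [hmdef]
            exact decide_eq_true (h1 ▸ hjS)
          · refine Or.inr (Or.inl ⟨j - (L + 2), ?_, by omega⟩)
            rw [hpB, memSB]
            have : j - (L + 2) + (L + 2) = j := by omega
            rw [this]; exact hjS

end M

namespace M

noncomputable def dyckEquiv (n k : ℕ) :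
    {t : M // validP false t ∧ msize t = n ∧ mmarks t = k} ≃
    {ps : List Bool × Finset ℕ //
      IsEvenSpecial ps ∧ ps.1.length = 2 * n ∧ ps.2.card = k} := by
  refine Equiv.ofBijective (fun t => ⟨(toDyck t.1, posSet t.1), ⟨⟨toDyck_isDyck t.1, ?_⟩, ?_, ?_⟩⟩)
    ⟨?_, ?_⟩
  · intro i hi
    obtain ⟨hg, hh⟩ := posSet_spec t.1 false t.2.1 i hi
    refine ⟨?_, hg, ?_⟩
    · rw [toDyck_length]
      exact posSet_lt i hi
    · simpa using hh
  · rw [toDyck_length, t.2.2.1]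
  · rw [posSet_card, t.2.2.2]
  · rintro ⟨s, hs⟩ ⟨t, ht⟩ h
    simp only [Subtype.mk.injEq, Prod.mk.injEq] at h ⊢
    exact toDyck_posSet_inj s t h.1 h.2
  · rintro ⟨⟨p, S⟩, ⟨hES, hlen, hcard⟩⟩
    have hcond : ∀ i ∈ S, i < p.length ∧ p.getD i true = false ∧
        (dyckHeight (p.take i) + (if false then 1 else 0)) % 2 = 0 := by
      intro i hi
      obtain ⟨h1, h2, h3⟩ := hES.2 i hi
      exact ⟨h1, h2, by simpa using h3⟩
    obtain ⟨t, hv, htD, htP⟩ := toDyck_surj p.length p S false le_rfl hES.1 hcond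
    refine ⟨⟨t, hv, ?_, ?_⟩, ?_⟩
    · have := toDyck_length t
      rw [htD, hlen] at this
      omega
    · rw [← posSet_card, htP]
      exact hcard
    · simp only [Subtype.mk.injEq, Prod.mk.injEq]
      exact ⟨htD, htP⟩

end M

section SchSide

namespace M

mutual
def toSch : M → List SchStep
  | leaf => []
  | node q r m => .up :: (toSch q ++ restS m r)
def restS : Bool → M → List SchStep
  | false, r => .down :: toSch r
  | true, leaf => [.down]
  | true, node q2 r2 m2 => .horiz :: (toSch q2 ++ restS m2 r2)
end

theorem restS_head (m : Bool) (r : M) :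
    ∃ y l, restS m r = y :: l ∧ (y = SchStep.down ∨ y = SchStep.horiz) := by
  cases m with
  | false => exact ⟨.down, toSch r, by simp [restS], Or.inl rfl⟩
  | true =>
    cases r with
    | leaf => exact ⟨.down, [], by simp [restS], Or.inl rfl⟩
    | node q2 r2 m2 => exact ⟨.horiz, toSch q2 ++ restS m2 r2, by simp [restS], Or.inr rfl⟩

theorem toSch_eq_nil_iff (t : M) : toSch t = [] ↔ t = leaf := by
  cases t with
  | leaf => simp [toSch]
  | node q r m => simp [toSch]

theorem toSch_invariants : ∀ t : M,
    (validV t → pathLen (toSch t) = 2 * msize t ∧ pathHeight (toSch t) = 0 ∧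
      (toSch t).count SchStep.horiz = mmarks t ∧
      (∀ q, q <+: toSch t → 0 ≤ pathHeight q) ∧
      (∀ a b, toSch t = a ++ SchStep.horiz :: b → 1 ≤ pathHeight a)) ∧
    (∀ m : Bool, validV t → (m = true → t ≠ leaf) →
      pathLen (restS m t) = 2 * msize t + 1 ∧ pathHeight (restS m t) = -1 ∧
      (restS m t).count SchStep.horiz = mmarks t + (if m then 1 else 0) ∧
      (∀ q, q <+: restS m t → 0 ≤ 1 + pathHeight q) ∧
      (∀ a b, restS m t = a ++ SchStep.horiz :: b → 0 ≤ pathHeight a)) := by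
  intro t
  induction t with
  | leaf =>
    constructor
    · intro _
      refine ⟨by simp [toSch, pathLen, msize], by simp [toSch, pathHeight],
        by simp [toSch, mmarks], ?_, ?_⟩
      · intro q hq
        simp only [toSch] at hq
        rw [List.prefix_nil.1 hq]
        simp [pathHeight]
      · intro a b hab
        exact absurd hab (by simp [toSch])
    · intro m _ hm
      have hm0 : m = false := by
        cases m
        · rfl
        · exact absurd rfl (hm rfl)
      subst hm0
      refine ⟨by simp [restS, toSch, pathLen, msize, SchStep.len],
        by simp [restS, toSch, pathHeight, SchStep.rise],
        by simp [restS, toSch, mmarks], ?_, ?_⟩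
      · intro q hq
        simp only [restS, toSch] at hq
        rcases List.prefix_cons_iff.1 hq with rfl | ⟨q', rfl, hq'⟩
        · simp [pathHeight]
        · rw [List.prefix_nil.1 hq']
          simp [pathHeight, SchStep.rise]
      · intro a b hab
        simp only [restS, toSch] at hab
        cases a with
        | nil => simp at hab
        | cons y a' =>
          simp only [List.cons_append, List.cons.injEq] at hab
          obtain ⟨rfl, hab⟩ := hab
          exact absurd hab.symm (by simp)
  | node q r m ihq ihr =>
    have hP : validV (node q r m) → pathLen (toSch (node q r m)) = 2 * msize (node q r m) ∧
        pathHeight (toSch (node q r m)) = 0 ∧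
        (toSch (node q r m)).count SchStep.horiz = mmarks (node q r m) ∧
        (∀ s, s <+: toSch (node q r m) → 0 ≤ pathHeight s) ∧
        (∀ a b, toSch (node q r m) = a ++ SchStep.horiz :: b → 1 ≤ pathHeight a) := by
      rintro ⟨hm, hq, hr⟩
      obtain ⟨hl1, hh1, hc1, hp1, hz1⟩ := ihq.1 hq
      obtain ⟨hl2, hh2, hc2, hp2, hz2⟩ := ihr.2 m hr hm
      refine ⟨?_, ?_, ?_, ?_, ?_⟩
      · rw [toSch, pathLen_cons, pathLen_append, hl1, hl2]
        simp [SchStep.len, msize]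
        omega
      · rw [toSch, pathHeight_cons, pathHeight_append, hh1, hh2]
        simp [SchStep.rise]
      · rw [toSch]
        simp only [List.count_cons, List.count_append]
        rw [hc1, hc2]
        simp [mmarks]
        omega
      · intro s hs
        rw [toSch] at hs
        rcases List.prefix_cons_iff.1 hs with rfl | ⟨s', rfl, hs'⟩
        · simp [pathHeight]
        · rw [pathHeight_cons]
          rcases prefix_split hs' with h1 | ⟨s'', rfl, h2⟩
          · have := hp1 s' h1
            simp [SchStep.rise]
            omega
          · have := hp2 s'' h2
            rw [pathHeight_append, hh1]
            simp [SchStep.rise]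
            omega
      · intro a b hab
        cases a with
        | nil => simp [toSch] at hab
        | cons y a' =>
          simp only [toSch, List.cons_append, List.cons.injEq] at hab
          obtain ⟨rfl, hab⟩ := hab
          rcases eq_append_cons_split hab with ⟨b', hx, _⟩ | ⟨a2, ha2, hy⟩
          · have := hz1 a' b' hx
            rw [pathHeight_cons]
            simp [SchStep.rise]
            omega
          · subst ha2
            have := hz2 a2 b hy
            rw [pathHeight_cons, pathHeight_append, hh1]
            simp [SchStep.rise]
            omega
    refine ⟨hP, ?_⟩
    intro mm hv _
    cases mm with
    | false =>
      obtain ⟨hl, hh, hc, hp, hz⟩ := hP hv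
      refine ⟨?_, ?_, ?_, ?_, ?_⟩
      · rw [restS, pathLen_cons, hl]
        simp [SchStep.len]
        omega
      · rw [restS, pathHeight_cons, hh]
        simp [SchStep.rise]
      · rw [restS, List.count_cons, hc]
        simp
      · intro s hs
        rw [restS] at hs
        rcases List.prefix_cons_iff.1 hs with rfl | ⟨s', rfl, hs'⟩
        · simp [pathHeight]
        · have := hp s' hs'
          rw [pathHeight_cons]
          simp [SchStep.rise]
          omega
      · intro a b hab
        cases a with
        | nil => simp [restS] at hab
        | cons y a' =>
          simp only [restS, List.cons_append, List.cons.injEq] at hab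
          obtain ⟨rfl, hab⟩ := hab
          have := hz a' b hab
          rw [pathHeight_cons]
          simp [SchStep.rise]
          omega
    | true =>
      obtain ⟨hm, hq, hr⟩ := hv
      obtain ⟨hl1, hh1, hc1, hp1, hz1⟩ := ihq.1 hq
      obtain ⟨hl2, hh2, hc2, hp2, hz2⟩ := ihr.2 m hr hm
      refine ⟨?_, ?_, ?_, ?_, ?_⟩
      · rw [restS, pathLen_cons, pathLen_append, hl1, hl2]
        simp [SchStep.len, msize]
        omega
      · rw [restS, pathHeight_cons, pathHeight_append, hh1, hh2]
        simp [SchStep.rise]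
      · rw [restS]
        simp only [List.count_cons, List.count_append]
        rw [hc1, hc2]
        simp [mmarks]
        omega
      · intro s hs
        rw [restS] at hs
        rcases List.prefix_cons_iff.1 hs with rfl | ⟨s', rfl, hs'⟩
        · simp [pathHeight]
        · rw [pathHeight_cons]
          rcases prefix_split hs' with h1 | ⟨s'', rfl, h2⟩
          · have := hp1 s' h1
            simp [SchStep.rise]
            omega
          · have := hp2 s'' h2
            rw [pathHeight_append, hh1]
            simp [SchStep.rise]
            omega
      · intro a b hab
        cases a with
        | nil => simp [pathHeight]
        | cons y a' =>
          simp only [restS, List.cons_append, List.cons.injEq] at hab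
          obtain ⟨rfl, hab⟩ := hab
          rcases eq_append_cons_split hab with ⟨b', hx, _⟩ | ⟨a2, ha2, hy⟩
          · have := hz1 a' b' hx
            rw [pathHeight_cons]
            simp [SchStep.rise]
            omega
          · subst ha2
            have := hz2 a2 b hy
            rw [pathHeight_cons, pathHeight_append, hh1]
            simp [SchStep.rise]
            omega

end M

end SchSide

section SchInj

/-- uniqueness of the canonical split of a Schröder word -/
theorem sch_split_unique {A1 R1 A2 R2 : List SchStep}
    (h : A1 ++ R1 = A2 ++ R2)
    (hA1 : pathHeight A1 = 0) (hp1 : ∀ q, q <+: A1 → 0 ≤ pathHeight q)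
    (hz1 : ∀ a b, A1 = a ++ SchStep.horiz :: b → 1 ≤ pathHeight a)
    (hA2 : pathHeight A2 = 0) (hp2 : ∀ q, q <+: A2 → 0 ≤ pathHeight q)
    (hz2 : ∀ a b, A2 = a ++ SchStep.horiz :: b → 1 ≤ pathHeight a)
    (hR1 : ∃ y l, R1 = y :: l ∧ (y = SchStep.down ∨ y = SchStep.horiz))
    (hR2 : ∃ y l, R2 = y :: l ∧ (y = SchStep.down ∨ y = SchStep.horiz)) :
    A1 = A2 ∧ R1 = R2 := by
  have key : ∀ {X1 Y1 X2 Y2 : List SchStep}, X1 ++ Y1 = X2 ++ Y2 →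
      pathHeight X2 = 0 → (∀ q, q <+: X2 → 0 ≤ pathHeight q) →
      (∀ a b, X2 = a ++ SchStep.horiz :: b → 1 ≤ pathHeight a) →
      pathHeight X1 = 0 →
      (∃ y l, Y1 = y :: l ∧ (y = SchStep.down ∨ y = SchStep.horiz)) →
      X1.length ≤ X2.length → X1 = X2 := by
    intro X1 Y1 X2 Y2 g g2h g2p g2z g1h gY1 hlen
    have hpre : X1 <+: X2 := by
      have : X1 <+: X2 ++ Y2 := ⟨Y1, g⟩
      exact (List.isPrefix_append_of_length hlen).1 this
    obtain ⟨d, rfl⟩ := hpre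
    cases d with
    | nil => simp
    | cons y d' =>
      exfalso
      obtain ⟨y0, l0, rfl, hy0⟩ := gY1
      rw [List.append_assoc] at g
      have := List.append_cancel_left g
      simp only [List.cons_append, List.cons.injEq] at this
      obtain ⟨rfl, _⟩ := this
      rcases hy0 with rfl | rfl
      · have hpp : X1 ++ [SchStep.down] <+: X1 ++ SchStep.down :: d' := ⟨d', by simp⟩
        have := g2p _ hpp
        rw [pathHeight_append, g1h] at this
        simp [pathHeight, SchStep.rise] at this
      · have := g2z X1 d' rfl
        omega
  rcases le_total A1.length A2.length with hle | hle
  · have := key h hA2 hp2 hz2 hA1 hR1 hle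
    subst this
    exact ⟨rfl, List.append_cancel_left h⟩
  · have := key h.symm hA1 hp1 hz1 hA2 hR2 hle
    subst this
    exact ⟨rfl, List.append_cancel_left h⟩
end SchInj

namespace M

theorem toSch_inj : ∀ t : M,
    (∀ s, validV s → validV t → toSch s = toSch t → s = t) ∧
    (∀ (m' : Bool) (s : M) (m : Bool), validV s → (m' = true → s ≠ leaf) →
      validV t → (m = true → t ≠ leaf) → restS m' s = restS m t → m' = m ∧ s = t) := by
  intro t
  induction t with
  | leaf =>
    constructor
    · intro s _ _ h
      rw [toSch] at h
      exact (toSch_eq_nil_iff s).1 h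
    · intro m' s m hvs hms _ hmt h
      have hm0 : m = false := by
        cases m
        · rfl
        · exact absurd rfl (hmt rfl)
      subst hm0
      rw [restS, toSch] at h
      cases m' with
      | false =>
        rw [restS] at h
        simp only [List.cons.injEq] at h
        exact ⟨rfl, (toSch_eq_nil_iff s).1 h.2⟩
      | true =>
        exfalso
        cases s with
        | leaf => exact absurd rfl (hms rfl)
        | node qs rs ms =>
          rw [restS] at h
          simp at h
  | node qt rt mt ihq ihr =>
    have hI : ∀ s, validV s → validV (node qt rt mt) → toSch s = toSch (node qt rt mt) →
        s = node qt rt mt := by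
      intro s hvs hvt h
      cases s with
      | leaf =>
        exfalso
        rw [toSch, toSch] at h
        simp at h
      | node qs rs ms =>
        obtain ⟨hmt, hqt, hrt⟩ := hvt
        obtain ⟨hms, hqs, hrs⟩ := hvs
        rw [toSch, toSch] at h
        simp only [List.cons.injEq, true_and] at h
        obtain ⟨_, hhs, _, hps, hzs⟩ := (toSch_invariants qs).1 hqs
        obtain ⟨_, hht, _, hpt, hzt⟩ := (toSch_invariants qt).1 hqt
        obtain ⟨hA, hR⟩ := sch_split_unique h hhs hps hzs hht hpt hzt
          (restS_head ms rs) (restS_head mt rt)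
        obtain rfl := ihq.1 qs hqs hqt hA
        obtain ⟨rfl, rfl⟩ := ihr.2 ms rs mt hrs hms hrt hmt hR
        rfl
    refine ⟨hI, ?_⟩
    intro m' s m hvs hms hvt hmt h
    cases m with
    | false =>
      cases m' with
      | true =>
        exfalso
        cases s with
        | leaf => exact absurd rfl (hms rfl)
        | node qs rs ms =>
          rw [restS, restS] at h
          simp at h
      | false =>
        rw [restS, restS] at h
        simp only [List.cons.injEq, true_and] at h
        exact ⟨rfl, hI s hvs hvt h⟩
    | true =>
      cases m' with
      | false =>
        exfalso
        rw [restS, restS] at h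
        simp at h
      | true =>
        cases s with
        | leaf => exact absurd rfl (hms rfl)
        | node qs rs ms =>
          obtain ⟨hmt2, hqt, hrt⟩ := hvt
          obtain ⟨hms2, hqs, hrs⟩ := hvs
          rw [restS, restS] at h
          simp only [List.cons.injEq, true_and] at h
          obtain ⟨_, hhs, _, hps, hzs⟩ := (toSch_invariants qs).1 hqs
          obtain ⟨_, hht, _, hpt, hzt⟩ := (toSch_invariants qt).1 hqt
          obtain ⟨hA, hR⟩ := sch_split_unique h hhs hps hzs hht hpt hzt
            (restS_head ms rs) (restS_head mt rt)
          obtain rfl := ihq.1 qs hqs hqt hA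
          obtain ⟨rfl, rfl⟩ := ihr.2 ms rs mt hrs hms2 hrt hmt2 hR
          exact ⟨rfl, rfl⟩

end M

namespace M

theorem toSch_surj : ∀ (N : ℕ) (p : List SchStep), p.length ≤ N → IsLittleSchroeder p →
    ∃ t : M, validV t ∧ toSch t = p := by
  intro N
  induction N with
  | zero =>
    intro p hlen _
    have : p = [] := List.length_eq_zero_iff.1 (by omega)
    subst this
    exact ⟨leaf, trivial, by rw [toSch]⟩
  | succ N ih =>
    intro p hlen hL
    cases p with
    | nil => exact ⟨leaf, trivial, by rw [toSch]⟩
    | cons x w =>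
      have hx : x = SchStep.up := by
        cases x with
        | up => rfl
        | down =>
          exfalso
          have := hL.1.2 [.down] ⟨w, rfl⟩
          simp [pathHeight, SchStep.rise] at this
        | horiz =>
          exfalso
          exact hL.2 [] w rfl rfl
      subst hx
      have hw : (1 : ℤ) + pathHeight w ≤ 0 := by
        have := hL.1.1
        rw [pathHeight_cons] at this
        simp [SchStep.rise] at this
        omega
      obtain ⟨A, c, B, rfl, hc, hA1, hApre, hAhor⟩ := sch_first_split w 1 le_rfl hw
      have hLA : IsLittleSchroeder A := by
        refine ⟨⟨by omega, fun q hq => by have := hApre q hq; omega⟩, ?_⟩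
        intro a b hab
        have h1 := hAhor a b hab
        have h2 : 0 ≤ pathHeight a := by
          have := hApre a ⟨SchStep.horiz :: b, hab.symm⟩
          omega
        omega
      have hlenA : A.length ≤ N := by
        simp at hlen
        omega
      have hlenB : B.length ≤ N := by
        simp at hlen
        omega
      have hptot := hL.1.1
      rw [pathHeight_cons, pathHeight_append, pathHeight_cons] at hptot
      rcases hc with rfl | rfl
      · -- c = down
        have hLB : IsLittleSchroeder B := by
          refine ⟨⟨?_, ?_⟩, ?_⟩
          · simp [SchStep.rise] at hptot
            omega
          · intro q hq
            obtain ⟨rest, rfl⟩ := hq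
            have hpre : (SchStep.up :: (A ++ SchStep.down :: q)) <+:
                (SchStep.up :: (A ++ SchStep.down :: (q ++ rest))) := ⟨rest, by simp⟩
            have := hL.1.2 _ hpre
            rw [pathHeight_cons, pathHeight_append, pathHeight_cons] at this
            simp [SchStep.rise] at this
            omega
          · intro a b hab
            subst hab
            have := hL.2 (SchStep.up :: (A ++ SchStep.down :: a)) b (by simp)
            rw [pathHeight_cons, pathHeight_append, pathHeight_cons] at this
            simp [SchStep.rise] at this
            omega
        obtain ⟨tA, hvA, htA⟩ := ih A hlenA hLA
        obtain ⟨tB, hvB, htB⟩ := ih B hlenB hLB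
        refine ⟨node tA tB false, ⟨by simp, hvA, hvB⟩, ?_⟩
        rw [toSch, restS, htA, htB]
      · -- c = horiz
        have hLB : IsLittleSchroeder (SchStep.up :: B) := by
          refine ⟨⟨?_, ?_⟩, ?_⟩
          · rw [pathHeight_cons]
            simp [SchStep.rise] at hptot ⊢
            omega
          · intro q hq
            rcases List.prefix_cons_iff.1 hq with rfl | ⟨q', rfl, hq'⟩
            · simp [pathHeight]
            · obtain ⟨rest, rfl⟩ := hq'
              have hpre : (SchStep.up :: (A ++ SchStep.horiz :: q')) <+:
                  (SchStep.up :: (A ++ SchStep.horiz :: (q' ++ rest))) := ⟨rest, by simp⟩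
              have := hL.1.2 _ hpre
              rw [pathHeight_cons, pathHeight_append, pathHeight_cons] at this
              rw [pathHeight_cons]
              simp [SchStep.rise] at this ⊢
              omega
          · intro a b hab
            cases a with
            | nil => simp at hab
            | cons y a' =>
              simp only [List.cons_append, List.cons.injEq] at hab
              obtain ⟨rfl, hab⟩ := hab
              subst hab
              have := hL.2 (SchStep.up :: (A ++ SchStep.horiz :: a')) b (by simp)
              rw [pathHeight_cons, pathHeight_append, pathHeight_cons] at this
              rw [pathHeight_cons]
              simp [SchStep.rise] at this ⊢
              omega
        obtain ⟨tA, hvA, htA⟩ := ih A hlenA hLA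
        obtain ⟨tU, hvU, htU⟩ := ih (SchStep.up :: B) (by simp at hlen ⊢; omega) hLB
        cases tU with
        | leaf => exact absurd htU (by rw [toSch]; simp)
        | node q2 r2 m2 =>
          rw [toSch] at htU
          simp only [List.cons.injEq, true_and] at htU
          refine ⟨node tA (node q2 r2 m2) true, ⟨fun _ => by simp, hvA, hvU⟩, ?_⟩
          rw [toSch, restS, htA, htU]

end M

namespace M

noncomputable def schEquiv (n k : ℕ) :
    {t : M // validV t ∧ msize t = n ∧ mmarks t = k} ≃
    {p : List SchStep //
      IsLittleSchroeder p ∧ pathLen p = 2 * n ∧ p.count SchStep.horiz = k} := by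
  refine Equiv.ofBijective (fun t => ⟨toSch t.1, ⟨⟨?_, ?_⟩, ?_⟩, ?_, ?_⟩) ⟨?_, ?_⟩
  · exact ((toSch_invariants t.1).1 t.2.1).2.1
  · exact ((toSch_invariants t.1).1 t.2.1).2.2.2.1
  · intro a b hab
    have := ((toSch_invariants t.1).1 t.2.1).2.2.2.2 a b hab
    omega
  · rw [((toSch_invariants t.1).1 t.2.1).1, t.2.2.1]
  · rw [((toSch_invariants t.1).1 t.2.1).2.2.1, t.2.2.2]
  · rintro ⟨s, hs⟩ ⟨t, ht⟩ h
    simp only [Subtype.mk.injEq] at h ⊢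
    exact (toSch_inj t).1 s hs.1 ht.1 h
  · rintro ⟨p, hp, hlen, hcount⟩
    obtain ⟨t, hv, htp⟩ := toSch_surj p.length p le_rfl hp
    have h1 := ((toSch_invariants t).1 hv).1
    have h2 := ((toSch_invariants t).1 hv).2.2.1
    rw [htp] at h1 h2
    refine ⟨⟨t, hv, by omega, by omega⟩, ?_⟩
    simp only [Subtype.mk.injEq]
    exact htp

end M


/-- The number of even-special Dyck paths of length `2n` with exactly `k` special steps
equals the number of little Schröder paths of length `2n` with exactly `k` double
horizontal steps. -/
theorem even_special_eq_little_schroeder (n k : ℕ) :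
    Nat.card {ps : List Bool × Finset ℕ //
        IsEvenSpecial ps ∧ ps.1.length = 2 * n ∧ ps.2.card = k} =
      Nat.card {p : List SchStep //
        IsLittleSchroeder p ∧ pathLen p = 2 * n ∧ p.count SchStep.horiz = k} := by
  exact Nat.card_congr (((M.dyckEquiv n k).symm.trans (M.sigmaEquiv n k)).trans (M.schEquiv n k))
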